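/- Let X=(X_1,…,X_d) be a random vector in S=[0,∞)^d, I⊆{1,…,d} nonempty, and assume the tail-balance condition: there is a function b, regularly varying at infinity with index α>0, with lim_{t→∞} b(t)·P(X_i>t)=c_i∈(0,∞) for every i∈I. Assume that for every i∈I the conditional law of X/X_i given {X_i>t} converges weakly as t→∞ to the law of a random vector Θ_i on S (with Θ_{i,i}=1 a.s.), and let ν be a tail measure of X. If i∈I is such that E[Θ_{i,j}^α]=c_j/c_i for all j∈I, then for every Borel measurable f:S_{0,I}→[0,∞] one has ∫ f dν = c_i E[∫_0^∞ f(z·Θ_i) α z^{−α−1} dz]. -/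

import Mathlib

open MeasureTheory ProbabilityTheory Filter Topology
open scoped ENNReal

/-- `b` is regularly varying at infinity with index `ρ`. -/
def RegularlyVarying (b : ℝ → ℝ) (ρ : ℝ) : Prop :=
  (∀ᶠ t in atTop, 0 < b t) ∧
    ∀ l : ℝ, 0 < l → Tendsto (fun t => b (l * t) / b t) atTop (𝓝 (l ^ ρ))

/-- `ν` is a tail measure of `X` (relative to `I` and `b`). -/
def IsTailMeasure {d : ℕ} {Ω : Type*} [MeasurableSpace Ω] (μ : Measure Ω)
    (X : Ω → Fin d → ℝ) (I : Finset (Fin d)) (b : ℝ → ℝ)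
    (ν : Measure (Fin d → ℝ)) : Prop :=
  (∀ ε > (0:ℝ), ν {x | ∃ i ∈ I, ε ≤ x i} < ⊤) ∧
  ν {x | ¬ ∃ i ∈ I, 0 < x i} = 0 ∧
  ∀ f : BoundedContinuousFunction (Fin d → ℝ) ℝ,
    (∃ ε > (0:ℝ), ∀ x : Fin d → ℝ, (∀ i ∈ I, x i ≤ ε) → f x = 0) →
    Tendsto (fun t => b t * ∫ ω, f (fun j => X ω j / t) ∂μ) atTop (𝓝 (∫ x, f x ∂ν))


/-!
Use polar coordinates relative to the `i`-th coordinate: radius `x i`, angle `x / x i`. Both `ν`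
restricted to `{x i > 0}` and the image `c_i · law(z Θ_i)` of `μ' ⊗ α z^{-α-1} dz` give
`{x i > a}`, weighted by `h (x / x i)`, the mass `c_i a^{-α} E[h(Θ_i)]`. For `ν` this follows from
the conditional convergence of `X / X_i` by squeezing the indicator of `{x i > a}` between
continuous ramps in `x i`. These weighted masses determine a measure carried by `{x i > 0}`, so
the two measures agree. The moment condition makes both give `{x j > u}` the same mass
`c_j u^{-α}` for `j ∈ I`, hence `ν` does not charge `{x j > 0, x i = 0}`.
-/

open Set
open scoped NNReal BoundedContinuousFunction

noncomputable def ramp (a η s : ℝ) : ℝ := max 0 (min 1 ((s - a) / η))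

theorem ramp_nonneg (a η s : ℝ) : 0 ≤ ramp a η s := le_max_left _ _

theorem ramp_le_one (a η s : ℝ) : ramp a η s ≤ 1 := max_le zero_le_one (min_le_left _ _)

theorem continuous_ramp (a η : ℝ) : Continuous (ramp a η) := by
  unfold ramp; fun_prop

theorem ramp_eq_zero {a η s : ℝ} (hη : 0 ≤ η) (hs : s ≤ a) : ramp a η s = 0 :=
  max_eq_left (min_le_of_right_le (div_nonpos_of_nonpos_of_nonneg (by linarith) hη))

theorem ramp_eq_one {a η s : ℝ} (hη : 0 < η) (hs : a + η ≤ s) : ramp a η s = 1 := by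
  rw [ramp, min_eq_left ((le_div_iff₀ hη).mpr (by linarith)), max_eq_right zero_le_one]

theorem lt_of_ramp_ne_zero {a η s : ℝ} (hη : 0 ≤ η) (h : ramp a η s ≠ 0) : a < s :=
  not_le.mp fun hs => h (ramp_eq_zero hη hs)

theorem mul_ramp_mem_Icc {a η s H : ℝ} (hη : 0 < η) (hH : 0 ≤ H) :
    H * ramp a η s ∈ Icc (if a + η < s then H else 0) (if a < s then H else 0) := by
  constructor
  · split_ifs with hs
    · rw [ramp_eq_one hη hs.le, mul_one]
    · exact mul_nonneg hH (ramp_nonneg _ _ _)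
  · split_ifs with hs
    · exact mul_le_of_le_one_right hH (ramp_le_one _ _ _)
    · rw [ramp_eq_zero hη.le (not_lt.mp hs), mul_zero]

theorem integral_mul_ramp_mem_Icc {Ω : Type*} [MeasurableSpace Ω] {μ : Measure Ω}
    {Y H : Ω → ℝ} (hY : Measurable Y) (hH : Integrable H μ) (hH0 : 0 ≤ H) {a η t : ℝ}
    (hη : 0 < η) (ht : 0 < t) :
    ∫ ω, H ω * ramp a η (Y ω / t) ∂μ
      ∈ Icc (∫ ω in {ω | (a + η) * t < Y ω}, H ω ∂μ) (∫ ω in {ω | a * t < Y ω}, H ω ∂μ) := by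
  have hset : ∀ z, MeasurableSet {ω | z * t < Y ω} := fun z =>
    measurableSet_lt measurable_const hY
  have hint : Integrable (fun ω => H ω * ramp a η (Y ω / t)) μ :=
    hH.mul_bdd ((continuous_ramp a η).measurable.comp (hY.div_const t)).aestronglyMeasurable
      (ae_of_all _ fun ω => by
        rw [Real.norm_of_nonneg (ramp_nonneg _ _ _)]; exact ramp_le_one _ _ _)
  rw [← integral_indicator (hset _), ← integral_indicator (hset _)]
  refine ⟨integral_mono_of_nonneg (ae_of_all _ (indicator_nonneg fun ω _ => hH0 ω)) hint
      (ae_of_all _ fun ω => ?_),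
    integral_mono_of_nonneg (ae_of_all _ fun ω => mul_nonneg (hH0 ω) (ramp_nonneg _ _ _))
      (hH.indicator (hset _)) (ae_of_all _ fun ω => ?_)⟩
  · simp only [indicator_apply, mem_ofPred_eq, ← lt_div_iff₀ ht]
    exact (mul_ramp_mem_Icc hη (hH0 ω)).1
  · simp only [indicator_apply, mem_ofPred_eq, ← lt_div_iff₀ ht]
    exact (mul_ramp_mem_Icc hη (hH0 ω)).2

theorem eq_of_le_of_le_nhdsGT {β : Type*} [TopologicalSpace β] [PartialOrder β]
    [OrderClosedTopology β] {f : ℝ → β} {a : ℝ} {L : β} (hf : ContinuousAt f a)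
    (hlow : ∀ᶠ η in 𝓝[>] 0, f (a + η) ≤ L) (hup : ∀ᶠ η in 𝓝[>] 0, L ≤ f (a - η)) :
    L = f a := by
  have hshift : ∀ g : ℝ → ℝ, Continuous g → g 0 = a →
      Tendsto (fun η => f (g η)) (𝓝[>] 0) (𝓝 (f a)) := fun g hg hg0 =>
    hf.tendsto.comp (hg0 ▸ hg.continuousAt.tendsto.mono_left nhdsWithin_le_nhds)
  exact le_antisymm
    (ge_of_tendsto (hshift (a - ·) (by fun_prop) (sub_zero a)) hup)
    (le_of_tendsto (hshift (a + ·) (by fun_prop) (add_zero a)) hlow)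

theorem RegularlyVarying.tendsto_mul_comp_const_mul {b : ℝ → ℝ} {α : ℝ}
    (hb : RegularlyVarying b α) {g : ℝ → ℝ} {c : ℝ}
    (hg : Tendsto (fun t => b t * g t) atTop (𝓝 c)) {v : ℝ} (hv : 0 < v) :
    Tendsto (fun t => b t * g (v * t)) atTop (𝓝 (c * v ^ (-α))) := by
  have hvt : Tendsto (fun t : ℝ => v * t) atTop atTop := tendsto_id.const_mul_atTop hv
  have hratio : Tendsto (fun t => (b (v * t) / b t)⁻¹) atTop (𝓝 ((v ^ α)⁻¹)) :=
    (hb.2 v hv).inv₀ (Real.rpow_pos_of_pos hv α).ne'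
  rw [Real.rpow_neg hv.le, mul_comm]
  refine (hratio.mul (hg.comp hvt)).congr' ?_
  filter_upwards [hb.1, hvt.eventually hb.1] with t hbt hbvt
  simp only [Function.comp_apply]
  field_simp

section Conditioning

variable {Ω : Type*} [MeasurableSpace Ω] (μ : Measure Ω) [IsFiniteMeasure μ]

theorem setIntegral_eq_measureReal_mul_integral_cond (s : Set Ω) (H : Ω → ℝ) :
    ∫ ω in s, H ω ∂μ = μ.real s * ∫ ω, H ω ∂μ[|s] := by
  rw [ProbabilityTheory.cond, integral_smul_measure, smul_eq_mul, ENNReal.toReal_inv,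
    ← measureReal_def]
  rcases eq_or_ne (μ s) 0 with hs | hs
  · rw [Measure.restrict_eq_zero.mpr hs, integral_zero_measure, mul_zero, mul_zero]
  · rw [← mul_assoc, mul_inv_cancel₀ ((measureReal_ne_zero_iff (measure_ne_top μ s)).mpr hs),
      one_mul]

theorem tendsto_mul_setIntegral_lt {b : ℝ → ℝ} {α : ℝ} (hb : RegularlyVarying b α)
    {Y H : Ω → ℝ} {c E : ℝ}
    (htail : Tendsto (fun t => b t * (μ {ω | t < Y ω}).toReal) atTop (𝓝 c))
    (hconv : Tendsto (fun t => ∫ ω, H ω ∂μ[|{ω | t < Y ω}]) atTop (𝓝 E)) {z : ℝ} (hz : 0 < z) :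
    Tendsto (fun t => b t * ∫ ω in {ω | z * t < Y ω}, H ω ∂μ) atTop
      (𝓝 (c * z ^ (-α) * E)) := by
  simp_rw [setIntegral_eq_measureReal_mul_integral_cond, ← mul_assoc, measureReal_def]
  exact (hb.tendsto_mul_comp_const_mul htail hz).mul
    (hconv.comp (tendsto_id.const_mul_atTop hz))

end Conditioning

section AngularRamp

variable {d : ℕ} (h : (Fin d → ℝ) →ᵇ ℝ) (i : Fin d)

/-- `h (x / x i) * ramp a η (x i)`, except that the denominator `max (x i) a` makes it continuous
without changing it where the ramp is nonzero. -/
noncomputable def angularRamp (a η : ℝ) (x : Fin d → ℝ) : ℝ :=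
  h (fun j => x j / max (x i) a) * ramp a η (x i)

theorem angularRamp_eq {a η : ℝ} (hη : 0 ≤ η) (x : Fin d → ℝ) :
    angularRamp h i a η x = h (fun j => x j / x i) * ramp a η (x i) := by
  by_cases hx : ramp a η (x i) = 0
  · simp only [angularRamp, hx, mul_zero]
  · rw [angularRamp, max_eq_left (lt_of_ramp_ne_zero hη hx).le]

theorem continuous_angularRamp {a : ℝ} (ha : 0 < a) (η : ℝ) : Continuous (angularRamp h i a η) := by
  have hden : ∀ x : Fin d → ℝ, max (x i) a ≠ 0 := fun x => (ha.trans_le (le_max_right _ _)).ne'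
  exact (h.continuous.comp (continuous_pi fun j =>
    (continuous_apply j).div ((continuous_apply i).max continuous_const) hden)).mul
    ((continuous_ramp a η).comp (continuous_apply i))

theorem norm_angularRamp_le (a η : ℝ) (x : Fin d → ℝ) : ‖angularRamp h i a η x‖ ≤ ‖h‖ := by
  rw [angularRamp, norm_mul, Real.norm_of_nonneg (ramp_nonneg _ _ _)]
  exact (mul_le_of_le_one_right (norm_nonneg _) (ramp_le_one _ _ _)).trans (h.norm_coe_le_norm _)

end AngularRamp

section TailMeasure

variable {d : ℕ} {Ω : Type*} [MeasurableSpace Ω] {μ : Measure Ω} {X : Ω → Fin d → ℝ}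
  {I : Finset (Fin d)} {b : ℝ → ℝ} {ν : Measure (Fin d → ℝ)}

theorem IsTailMeasure.measure_setOf_lt_ne_top (hν : IsTailMeasure μ X I b ν) {j : Fin d}
    (hj : j ∈ I) {a : ℝ} (ha : 0 < a) : ν {x | a < x j} ≠ ⊤ :=
  have hsub : {x : Fin d → ℝ | a < x j} ⊆ {x | ∃ k ∈ I, a ≤ x k} := fun _ hx => ⟨j, hj, hx.le⟩
  ((measure_mono hsub).trans_lt (hν.1 a ha)).ne

theorem IsTailMeasure.integrable (hν : IsTailMeasure μ X I b ν) {j : Fin d} (hj : j ∈ I)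
    {a : ℝ} (ha : 0 < a) (f : (Fin d → ℝ) →ᵇ ℝ) (hf : ∀ x, x j ≤ a → f x = 0) :
    Integrable f ν := by
  have hs : MeasurableSet {x : Fin d → ℝ | a < x j} :=
    measurableSet_lt measurable_const (by fun_prop)
  have hfs : ⇑f = {x | a < x j}.indicator f := by
    ext x
    by_cases hx : a < x j
    · simp [hx]
    · simp [hx, hf x (not_lt.mp hx)]
  rw [hfs, integrable_indicator_iff hs]
  exact Measure.integrableOn_of_bounded (hν.measure_setOf_lt_ne_top hj ha)
    f.continuous.aestronglyMeasurable (ae_of_all _ f.norm_coe_le_norm)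

end TailMeasure

section TailMeasureOfProbability

variable {d : ℕ} {Ω : Type*} [MeasurableSpace Ω] {μ : Measure Ω} [IsProbabilityMeasure μ]
  {X : Ω → Fin d → ℝ} {I : Finset (Fin d)} {b : ℝ → ℝ} {α : ℝ} {ν : Measure (Fin d → ℝ)}

theorem IsTailMeasure.lintegral_angularRamp_mem_Icc (hν : IsTailMeasure μ X I b ν)
    (hX : Measurable X) (hb : RegularlyVarying b α) {i : Fin d} (hi : i ∈ I) {c E : ℝ}
    (htail : Tendsto (fun t => b t * (μ {ω | t < X ω i}).toReal) atTop (𝓝 c))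
    (h : (Fin d → ℝ) →ᵇ ℝ) (hh : 0 ≤ h)
    (hconv : Tendsto (fun t => ∫ ω, h (fun j => X ω j / X ω i) ∂μ[|{ω | t < X ω i}]) atTop
      (𝓝 E))
    {a η : ℝ} (ha : 0 < a) (hη : 0 < η) :
    ∫⁻ x, ENNReal.ofReal (angularRamp h i a η x) ∂ν
      ∈ Icc (ENNReal.ofReal (c * (a + η) ^ (-α) * E)) (ENNReal.ofReal (c * a ^ (-α) * E)) := by
  let F : (Fin d → ℝ) →ᵇ ℝ := .ofNormedAddCommGroup (angularRamp h i a η)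
    (continuous_angularRamp h i ha η) ‖h‖ (norm_angularRamp_le h i a η)
  have hF0 : ∀ x, x i ≤ a → F x = 0 := fun x hx => by
    simp [F, angularRamp, ramp_eq_zero hη.le hx]
  have hlim : Tendsto (fun t => b t * ∫ ω, F (fun j => X ω j / t) ∂μ) atTop
      (𝓝 (∫ x, F x ∂ν)) :=
    hν.2.2 F ⟨a, ha, fun x hx => hF0 x (hx i hi)⟩
  have hlin : ∫⁻ x, ENNReal.ofReal (angularRamp h i a η x) ∂ν = ENNReal.ofReal (∫ x, F x ∂ν) :=
    (ofReal_integral_eq_lintegral_ofReal (hν.integrable hi ha F hF0)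
      (ae_of_all _ fun x => mul_nonneg (hh _) (ramp_nonneg _ _ _))).symm
  set H : Ω → ℝ := fun ω => h (fun j => X ω j / X ω i)
  have hHint : Integrable H μ :=
    .of_bound (h.continuous.measurable.comp (by fun_prop)).aestronglyMeasurable ‖h‖
      (ae_of_all _ fun ω => h.norm_coe_le_norm _)
  have hFX : ∀ t, 0 < t → ∀ ω, F (fun j => X ω j / t) = H ω * ramp a η (X ω i / t) :=
    fun t ht ω => by
      simp only [F, BoundedContinuousFunction.coe_ofNormedAddCommGroup,
        angularRamp_eq h i hη.le, H, div_div_div_cancel_right₀ ht.ne']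
  have hcmp : ∀ᶠ t in atTop, b t * ∫ ω, F (fun j => X ω j / t) ∂μ ∈
      Icc (b t * ∫ ω in {ω | (a + η) * t < X ω i}, H ω ∂μ)
        (b t * ∫ ω in {ω | a * t < X ω i}, H ω ∂μ) := by
    filter_upwards [hb.1, eventually_gt_atTop 0] with t hbt ht
    rw [integral_congr_ae (ae_of_all _ (hFX t ht))]
    obtain ⟨hlow, hup⟩ := integral_mul_ramp_mem_Icc (μ := μ) (Y := fun ω => X ω i) (by fun_prop)
      hHint (fun _ => hh _) (a := a) hη ht
    exact ⟨mul_le_mul_of_nonneg_left hlow hbt.le, mul_le_mul_of_nonneg_left hup hbt.le⟩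
  rw [hlin]
  exact ⟨ENNReal.ofReal_le_ofReal (le_of_tendsto_of_tendsto
      (tendsto_mul_setIntegral_lt μ hb htail hconv (by positivity)) hlim
      (hcmp.mono fun _ => And.left)),
    ENNReal.ofReal_le_ofReal (le_of_tendsto_of_tendsto hlim
      (tendsto_mul_setIntegral_lt μ hb htail hconv ha) (hcmp.mono fun _ => And.right))⟩

theorem IsTailMeasure.setLIntegral_angular_eq (hν : IsTailMeasure μ X I b ν)
    (hX : Measurable X) (hb : RegularlyVarying b α) {i : Fin d} (hi : i ∈ I) {c E : ℝ}
    (htail : Tendsto (fun t => b t * (μ {ω | t < X ω i}).toReal) atTop (𝓝 c))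
    (h : (Fin d → ℝ) →ᵇ ℝ) (hh : 0 ≤ h)
    (hconv : Tendsto (fun t => ∫ ω, h (fun j => X ω j / X ω i) ∂μ[|{ω | t < X ω i}]) atTop
      (𝓝 E))
    {a : ℝ} (ha : 0 < a) :
    ∫⁻ x in {x | a < x i}, ENNReal.ofReal (h (fun j => x j / x i)) ∂ν
      = ENNReal.ofReal (c * a ^ (-α) * E) := by
  have hs : MeasurableSet {x : Fin d → ℝ | a < x i} :=
    measurableSet_lt measurable_const (by fun_prop)
  have hcmp : ∀ {a' η : ℝ}, 0 < η → ∀ x, angularRamp h i a' η x ∈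
      Icc (if a' + η < x i then h (fun j => x j / x i) else 0)
        (if a' < x i then h (fun j => x j / x i) else 0) :=
    fun hη x => by rw [angularRamp_eq h i hη.le]; exact mul_ramp_mem_Icc hη (hh _)
  rw [← lintegral_indicator hs]
  -- the ramps from `a` to `a + η` and from `a - η` to `a` squeeze the indicator of `{a < x i}`
  refine eq_of_le_of_le_nhdsGT (f := fun s => ENNReal.ofReal (c * s ^ (-α) * E)) ?_ ?_ ?_
  · exact ENNReal.continuous_ofReal.continuousAt.comp
      (((Real.continuousAt_rpow_const a _ (Or.inl ha.ne')).const_mul c).mul_const E)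
  · filter_upwards [self_mem_nhdsWithin] with η (hη : 0 < η)
    refine (hν.lintegral_angularRamp_mem_Icc hX hb hi htail h hh hconv ha hη).1.trans
      (lintegral_mono fun x => (ENNReal.ofReal_le_ofReal (hcmp hη x).2).trans ?_)
    by_cases hx : a < x i <;> simp [hx]
  · filter_upwards [Ioo_mem_nhdsGT ha] with η hη
    refine (lintegral_mono fun x => le_trans ?_ (ENNReal.ofReal_le_ofReal (hcmp hη.1 x).1)).trans
      (hν.lintegral_angularRamp_mem_Icc hX hb hi htail h hh hconv (sub_pos.mpr hη.2) hη.1).2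
    by_cases hx : a < x i <;> simp [hx]

theorem IsTailMeasure.measure_setOf_lt_eq (hν : IsTailMeasure μ X I b ν) (hX : Measurable X)
    (hb : RegularlyVarying b α) {j : Fin d} (hj : j ∈ I) {c : ℝ} (hc : 0 < c)
    (htail : Tendsto (fun t => b t * (μ {ω | t < X ω j}).toReal) atTop (𝓝 c))
    {u : ℝ} (hu : 0 < u) : ν {x | u < x j} = ENNReal.ofReal (c * u ^ (-α)) := by
  have hcond : Tendsto (fun t => ∫ ω, (1 : (Fin d → ℝ) →ᵇ ℝ) (fun k => X ω k / X ω j)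
      ∂μ[|{ω | t < X ω j}]) atTop (𝓝 1) := by
    refine tendsto_const_nhds.congr' ?_
    filter_upwards [htail.eventually (eventually_gt_nhds hc)] with t ht
    have : μ {ω | t < X ω j} ≠ 0 := fun h0 => by simp [h0] at ht
    have := cond_isProbabilityMeasure (μ := μ) this
    simp
  simpa using hν.setLIntegral_angular_eq hX hb hj htail 1 (fun _ => zero_le_one) hcond hu

end TailMeasureOfProbability

theorem MeasureTheory.Measure.ext_of_restrict_lt {β : Type*} [MeasurableSpace β]
    {ν₁ ν₂ : Measure β} {φ : β → ℝ} (h₁ : ∀ᵐ x ∂ν₁, 0 < φ x) (h₂ : ∀ᵐ x ∂ν₂, 0 < φ x)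
    (h : ∀ a, 0 < a → ν₁.restrict {x | a < φ x} = ν₂.restrict {x | a < φ x}) : ν₁ = ν₂ := by
  have hunion : {x | 0 < φ x} = ⋃ n : ℕ, {x | 1 / ((n : ℝ) + 1) < φ x} := by
    ext x
    simp only [mem_ofPred_eq, mem_iUnion]
    exact ⟨fun hx => exists_nat_one_div_lt hx, fun ⟨n, hn⟩ => lt_trans (by positivity) hn⟩
  rw [← restrict_eq_self_of_ae_mem (s := {x | 0 < φ x}) h₁,
    ← restrict_eq_self_of_ae_mem (s := {x | 0 < φ x}) h₂, hunion, restrict_iUnion_congr]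
  exact fun n => h _ (by positivity)

theorem isCountablySpanning_range_Ioi : IsCountablySpanning (range (Ioi : ℝ → Set ℝ)) :=
  ⟨fun n : ℕ => Ioi (-n), fun _ => mem_range_self _,
    eq_univ_of_forall fun x => mem_iUnion.mpr ((exists_nat_gt (-x)).imp fun _ hn => by
      simp only [mem_Ioi]; linarith)⟩

section Polar

variable {d : ℕ}

/-- In the coordinates `(x i, x / x i)`, which are injective off `{x i = 0}`, these sets are the
rectangles `Ioi r ×ˢ B`, and those generate the product σ-algebra. -/
theorem MeasureTheory.Measure.ext_of_polar_rectangles {m₁ m₂ : Measure (Fin d → ℝ)}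
    [IsFiniteMeasure m₁] (i : Fin d) (h₁ : ∀ᵐ x ∂m₁, x i ≠ 0) (h₂ : ∀ᵐ x ∂m₂, x i ≠ 0)
    (huniv : m₁ univ = m₂ univ)
    (h : ∀ r B, MeasurableSet B →
      m₁ ({x | r < x i} ∩ (fun x j => x j / x i) ⁻¹' B)
        = m₂ ({x | r < x i} ∩ (fun x j => x j / x i) ⁻¹' B)) : m₁ = m₂ := by
  let Φ : (Fin d → ℝ) → ℝ × (Fin d → ℝ) := fun x => (x i, fun j => x j / x i)
  let Ψ : ℝ × (Fin d → ℝ) → (Fin d → ℝ) := fun p j => p.1 * p.2 j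
  have hΦ : Measurable Φ := by fun_prop
  have hΨ : Measurable Ψ := by fun_prop
  have hrecover : ∀ m : Measure (Fin d → ℝ), (∀ᵐ x ∂m, x i ≠ 0) → (m.map Φ).map Ψ = m := by
    intro m hm
    rw [Measure.map_map hΨ hΦ]
    conv_rhs => rw [← Measure.map_id (μ := m)]
    refine Measure.map_congr (hm.mono fun x hx => funext fun j => ?_)
    simp only [Function.comp_apply, Φ, Ψ, id]
    field_simp
  have hgen : MeasurableSpace.generateFrom
      (image2 (· ×ˢ ·) (range Ioi) {B : Set (Fin d → ℝ) | MeasurableSet B})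
      = (inferInstance : MeasurableSpace (ℝ × (Fin d → ℝ))) :=
    generateFrom_eq_prod ((borel_eq_generateFrom_Ioi ℝ).symm.trans BorelSpace.measurable_eq.symm)
      MeasurableSpace.generateFrom_measurableSet isCountablySpanning_range_Ioi
      isCountablySpanning_measurableSet
  have hmap : m₁.map Φ = m₂.map Φ := by
    refine ext_of_generate_finite _ hgen.symm
      (isPiSystem_Ioi.prod MeasurableSpace.isPiSystem_measurableSet) ?_ ?_
    · rintro _ ⟨_, ⟨r, rfl⟩, B, hB, rfl⟩
      rw [Measure.map_apply hΦ (measurableSet_Ioi.prod hB),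
        Measure.map_apply hΦ (measurableSet_Ioi.prod hB)]
      exact h r B hB
    · rw [Measure.map_apply hΦ .univ, Measure.map_apply hΦ .univ]
      exact huniv
  rw [← hrecover m₁ h₁, ← hrecover m₂ h₂, hmap]

theorem MeasureTheory.Measure.ext_of_setLIntegral_angular {ν₁ ν₂ : Measure (Fin d → ℝ)}
    (i : Fin d) (h₁ : ∀ᵐ x ∂ν₁, 0 < x i) (h₂ : ∀ᵐ x ∂ν₂, 0 < x i)
    (hfin : ∀ a, 0 < a → ν₁ {x | a < x i} ≠ ⊤)
    (heq : ∀ h : (Fin d → ℝ) →ᵇ ℝ, 0 ≤ h → ∀ a, 0 < a →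
      ∫⁻ x in {x | a < x i}, ENNReal.ofReal (h fun j => x j / x i) ∂ν₁
        = ∫⁻ x in {x | a < x i}, ENNReal.ofReal (h fun j => x j / x i) ∂ν₂) : ν₁ = ν₂ := by
  set ang : (Fin d → ℝ) → Fin d → ℝ := fun x j => x j / x i
  have hang : Measurable ang := by fun_prop
  have hs : ∀ a : ℝ, MeasurableSet {x : Fin d → ℝ | a < x i} := fun a =>
    measurableSet_lt measurable_const (by fun_prop)
  have hfin' : ∀ a, 0 < a → IsFiniteMeasure (ν₁.restrict {x | a < x i}) := fun a ha =>
    ⟨by simpa using (hfin a ha).lt_top⟩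
  have hangular : ∀ a, 0 < a →
      (ν₁.restrict {x | a < x i}).map ang = (ν₂.restrict {x | a < x i}).map ang := by
    intro a ha
    have := hfin' a ha
    refine ext_of_forall_lintegral_eq_of_IsFiniteMeasure fun g => ?_
    rw [lintegral_map (by fun_prop) hang, lintegral_map (by fun_prop) hang]
    simpa using heq (.comp _ NNReal.isometry_coe.lipschitz g) (fun _ => (g _).2) a ha
  have hrect : ∀ (ν : Measure (Fin d → ℝ)) (a r : ℝ) (B : Set (Fin d → ℝ)), MeasurableSet B →
      ν.restrict {x | a < x i} ({x | r < x i} ∩ ang ⁻¹' B)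
        = (ν.restrict {x | max r a < x i}).map ang B := by
    intro ν a r B hB
    rw [Measure.map_apply hang hB, Measure.restrict_apply (hang hB),
      Measure.restrict_apply ((hs r).inter (hang hB))]
    congr 1
    ext x
    simp only [mem_inter_iff, mem_ofPred_eq, max_lt_iff]
    tauto
  refine ext_of_restrict_lt h₁ h₂ fun a ha => ?_
  have := hfin' a ha
  refine ext_of_polar_rectangles i ((ae_restrict_mem (hs a)).mono fun x hx => (ha.trans hx).ne')
    ((ae_restrict_mem (hs a)).mono fun x hx => (ha.trans hx).ne') ?_ fun r B hB => ?_
  · simpa [Measure.map_apply hang .univ] using congr_arg (· univ) (hangular a ha)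
  · rw [hrect ν₁ a r B hB, hrect ν₂ a r B hB, hangular _ (lt_max_of_lt_right ha)]

end Polar

section PolarMeasure

variable {d : ℕ} {Ω' : Type*} [MeasurableSpace Ω']

noncomputable def radialMeasure (α : ℝ) : Measure ℝ :=
  (volume.restrict (Ioi 0)).withDensity fun z => ENNReal.ofReal (α * z ^ (-α - 1))

instance (α : ℝ) : SigmaFinite (radialMeasure α) := by
  unfold radialMeasure; infer_instance

theorem lintegral_radialMeasure (α : ℝ) {g : ℝ → ℝ≥0∞} (hg : Measurable g) :
    ∫⁻ z, g z ∂radialMeasure α = ∫⁻ z in Ioi 0, g z * ENNReal.ofReal (α * z ^ (-α - 1)) := by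
  rw [radialMeasure, lintegral_withDensity_eq_lintegral_mul _ (by fun_prop) hg]
  simp only [Pi.mul_apply, mul_comm]

theorem radialMeasure_Iic_zero (α : ℝ) : radialMeasure α (Iic 0) = 0 := by
  rw [radialMeasure, withDensity_apply _ measurableSet_Iic,
    Measure.restrict_restrict measurableSet_Iic, Iic_inter_Ioi, Ioc_self, Measure.restrict_empty,
    lintegral_zero_measure]

theorem radialMeasure_Ioi {α : ℝ} (hα : 0 < α) {s : ℝ} (hs : 0 < s) :
    radialMeasure α (Ioi s) = ENNReal.ofReal (s ^ (-α)) := by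
  have hlt : -α - 1 < -1 := by linarith
  rw [radialMeasure, withDensity_apply _ measurableSet_Ioi,
    Measure.restrict_restrict measurableSet_Ioi, inter_eq_left.mpr (Ioi_subset_Ioi hs.le),
    ← ofReal_integral_eq_lintegral_ofReal ((integrableOn_Ioi_rpow_of_lt hlt hs).const_mul α)
      ((ae_restrict_mem measurableSet_Ioi).mono fun z (hz : s < z) =>
        mul_nonneg hα.le (Real.rpow_nonneg (hs.trans hz).le _)),
    integral_const_mul, integral_Ioi_rpow_of_lt hlt hs, sub_add_cancel]
  congr 1
  field_simp

theorem radialMeasure_setOf_lt_mul {α : ℝ} (hα : 0 < α) {θ u : ℝ} (hθ : 0 ≤ θ) (hu : 0 < u) :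
    radialMeasure α {z | u < z * θ} = ENNReal.ofReal (θ ^ α * u ^ (-α)) := by
  rcases hθ.eq_or_lt with rfl | hθ
  · simp [not_lt.mpr hu.le, Real.zero_rpow hα.ne']
  · have : {z | u < z * θ} = Ioi (u / θ) := by ext z; simp [div_lt_iff₀ hθ]
    rw [this, radialMeasure_Ioi hα (div_pos hu hθ), Real.div_rpow hu.le hθ.le,
      Real.rpow_neg hθ.le, div_inv_eq_mul, mul_comm]

noncomputable def polarMeasure (α c : ℝ) (μ' : Measure Ω') (Θ : Ω' → Fin d → ℝ) :
    Measure (Fin d → ℝ) :=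
  ENNReal.ofReal c • (μ'.prod (radialMeasure α)).map fun p j => p.2 * Θ p.1 j

variable {α c : ℝ} {μ' : Measure Ω'} {Θ : Ω' → Fin d → ℝ}

theorem lintegral_polarMeasure (hΘ : Measurable Θ) {f : (Fin d → ℝ) → ℝ≥0∞} (hf : Measurable f) :
    ∫⁻ x, f x ∂polarMeasure α c μ' Θ
      = ENNReal.ofReal c * ∫⁻ ω', ∫⁻ z, f (fun j => z * Θ ω' j) ∂radialMeasure α ∂μ' := by
  rw [polarMeasure, lintegral_smul_measure, lintegral_map hf (by fun_prop),
    lintegral_prod (fun p : Ω' × ℝ => f fun j => p.2 * Θ p.1 j)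
      (hf.comp (by fun_prop)).aemeasurable, smul_eq_mul]

theorem polarMeasure_apply (hΘ : Measurable Θ) {s : Set (Fin d → ℝ)} (hs : MeasurableSet s) :
    polarMeasure α c μ' Θ s
      = ENNReal.ofReal c * ∫⁻ ω', radialMeasure α {z | (fun j => z * Θ ω' j) ∈ s} ∂μ' := by
  rw [polarMeasure, Measure.smul_apply, Measure.map_apply (by fun_prop) hs,
    Measure.prod_apply (hs.preimage (by fun_prop)), smul_eq_mul]
  rfl

theorem ae_polarMeasure_pos (hΘ : Measurable Θ) {i : Fin d} (hΘi : ∀ᵐ ω' ∂μ', Θ ω' i = 1) :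
    ∀ᵐ x ∂polarMeasure α c μ' Θ, 0 < x i := by
  have hs : MeasurableSet {x : Fin d → ℝ | ¬ 0 < x i} :=
    (measurableSet_lt measurable_const (measurable_pi_apply i)).compl
  rw [ae_iff, polarMeasure_apply hΘ hs,
    lintegral_congr_ae (g := 0) (hΘi.mono fun ω' hω' => ?_)]
  · simp
  · simp only [mem_ofPred_eq, hω', mul_one, not_lt, Pi.zero_apply]
    exact radialMeasure_Iic_zero α

theorem polarMeasure_setOf_lt_eq (hα : 0 < α) (hc : 0 < c) (hΘ : Measurable Θ) {j : Fin d}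
    (hΘj : ∀ ω', 0 ≤ Θ ω' j) {c' : ℝ}
    (hmom : ∫⁻ ω', ENNReal.ofReal (Θ ω' j ^ α) ∂μ' = ENNReal.ofReal (c' / c)) {u : ℝ}
    (hu : 0 < u) : polarMeasure α c μ' Θ {x | u < x j} = ENNReal.ofReal (c' * u ^ (-α)) := by
  have hu' : 0 ≤ u ^ (-α) := Real.rpow_nonneg hu.le _
  have hinner : ∀ ω', radialMeasure α {z | (fun k => z * Θ ω' k) ∈ {x | u < x j}}
      = ENNReal.ofReal (Θ ω' j ^ α) * ENNReal.ofReal (u ^ (-α)) := fun ω' => by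
    rw [← ENNReal.ofReal_mul' hu']
    exact radialMeasure_setOf_lt_mul hα (hΘj _) hu
  rw [polarMeasure_apply hΘ (measurableSet_lt measurable_const (by fun_prop)),
    lintegral_congr hinner, lintegral_mul_const _ (by fun_prop), hmom,
    ← ENNReal.ofReal_mul' hu', ← ENNReal.ofReal_mul hc.le]
  congr 1
  field_simp

theorem setLIntegral_polarMeasure_angular_eq [IsProbabilityMeasure μ'] (hα : 0 < α) (hc : 0 ≤ c)
    (hΘ : Measurable Θ) {i : Fin d} (hΘi : ∀ᵐ ω' ∂μ', Θ ω' i = 1) (h : (Fin d → ℝ) →ᵇ ℝ)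
    (hh : 0 ≤ h) {a : ℝ} (ha : 0 < a) :
    ∫⁻ x in {x | a < x i}, ENNReal.ofReal (h fun j => x j / x i) ∂polarMeasure α c μ' Θ
      = ENNReal.ofReal (c * a ^ (-α) * ∫ ω', h (Θ ω') ∂μ') := by
  have hs : MeasurableSet {x : Fin d → ℝ | a < x i} :=
    measurableSet_lt measurable_const (by fun_prop)
  rw [← lintegral_indicator hs,
    lintegral_polarMeasure hΘ ((by fun_prop : Measurable _).indicator hs)]
  set F : (Fin d → ℝ) → ℝ≥0∞ :=
    {x | a < x i}.indicator fun x => ENNReal.ofReal (h fun j => x j / x i)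
  have hinner : ∀ᵐ ω' ∂μ', ∫⁻ z, F (fun j => z * Θ ω' j) ∂radialMeasure α
      = ENNReal.ofReal (h (Θ ω')) * ENNReal.ofReal (a ^ (-α)) := by
    filter_upwards [hΘi] with ω' hω'
    have hpt : ∀ z, F (fun j => z * Θ ω' j)
        = (Ioi a).indicator (fun _ => ENNReal.ofReal (h (Θ ω'))) z := by
      intro z
      by_cases hz : a < z
      · simp [F, hz, hω', mul_div_cancel_left₀ _ (ha.trans hz).ne']
      · simp [F, hz, hω']
    rw [lintegral_congr hpt, lintegral_indicator_const measurableSet_Ioi, radialMeasure_Ioi hα ha]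
  have hE : ∫⁻ ω', ENNReal.ofReal (h (Θ ω')) ∂μ' = ENNReal.ofReal (∫ ω', h (Θ ω') ∂μ') :=
    (ofReal_integral_eq_lintegral_ofReal
      (.of_bound (by fun_prop) ‖h‖ (ae_of_all _ fun _ => h.norm_coe_le_norm _))
      (ae_of_all _ fun _ => hh _)).symm
  rw [lintegral_congr_ae hinner, lintegral_mul_const _ (by fun_prop), hE,
    ← ENNReal.ofReal_mul' (Real.rpow_nonneg ha.le _), ← ENNReal.ofReal_mul hc]
  congr 1
  ring

end PolarMeasure

theorem measure_sdiff_eq_zero_of_restrict_eq {β : Type*} [MeasurableSpace β] {ν ν' : Measure β}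
    {A s : Set β} (hA : MeasurableSet A) (hrestrict : ν.restrict A = ν') (hfin : ν s ≠ ⊤)
    (heq : ν' s = ν s) : ν (s \ A) = 0 := by
  have := measure_inter_add_sdiff (μ := ν) s hA
  rw [← Measure.restrict_apply' hA, hrestrict, heq] at this
  exact (ENNReal.add_right_inj hfin).mp (this.trans (add_zero _).symm)

theorem setOf_exists_pos_ae_eq_of_restrict_eq {d : ℕ} {ν ν' : Measure (Fin d → ℝ)}
    {I : Finset (Fin d)} {A : Set (Fin d → ℝ)} (hA : MeasurableSet A)
    (hAsub : A ⊆ {x | ∃ k ∈ I, 0 < x k}) (hrestrict : ν.restrict A = ν')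
    (hmass : ∀ k ∈ I, ∀ u : ℝ, 0 < u →
      ν {x | u < x k} ≠ ⊤ ∧ ν' {x | u < x k} = ν {x | u < x k}) :
    {x | ∃ k ∈ I, 0 < x k} =ᵐ[ν] A := by
  have hcover : {x : Fin d → ℝ | ∃ k ∈ I, 0 < x k} \ A
      ⊆ ⋃ k ∈ I, ⋃ n : ℕ, {x | 1 / ((n : ℝ) + 1) < x k} \ A := by
    rintro x ⟨⟨k, hk, hxk⟩, hxA⟩
    exact mem_biUnion hk (mem_iUnion.mpr ((exists_nat_one_div_lt hxk).imp fun n hn => ⟨hn, hxA⟩))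
  refine ae_eq_set.mpr ⟨measure_mono_null hcover ((measure_biUnion_null_iff I.countable_toSet).mpr
    fun k hk => measure_iUnion_null fun n => ?_), by rw [sdiff_eq_empty.mpr hAsub, measure_empty]⟩
  obtain ⟨hfin, heq⟩ := hmass k hk (1 / ((n : ℝ) + 1)) (by positivity)
  exact measure_sdiff_eq_zero_of_restrict_eq hA hrestrict hfin heq

theorem tail_measure_from_single_root_general
    {d : ℕ} {Ω : Type*} [MeasurableSpace Ω] (μ : Measure Ω) [IsProbabilityMeasure μ]
    (X : Ω → Fin d → ℝ) (hXmeas : Measurable X)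
    (I : Finset (Fin d))
    (b : ℝ → ℝ) (α : ℝ) (hα : 0 < α) (hb : RegularlyVarying b α)
    (c : Fin d → ℝ) (hc : ∀ i ∈ I, 0 < c i)
    (htail : ∀ i ∈ I,
      Tendsto (fun t => b t * (μ {ω | t < X ω i}).toReal) atTop (𝓝 (c i)))
    {Ω' : Type*} [MeasurableSpace Ω'] (μ' : Measure Ω') [IsProbabilityMeasure μ']
    (Θ : Fin d → Ω' → Fin d → ℝ) (hΘmeas : ∀ i, Measurable (Θ i))
    (hΘnn : ∀ i ω' j, 0 ≤ Θ i ω' j)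
    (hΘii : ∀ i ∈ I, ∀ᵐ ω' ∂μ', Θ i ω' i = 1)
    (hconv : ∀ i ∈ I, ∀ f : BoundedContinuousFunction (Fin d → ℝ) ℝ,
      Tendsto (fun t => ∫ ω, f (fun j => X ω j / X ω i) ∂(μ[|{ω | t < X ω i}])) atTop
        (𝓝 (∫ ω', f (Θ i ω') ∂μ')))
    (ν : Measure (Fin d → ℝ)) (hν : IsTailMeasure μ X I b ν)
    (i : Fin d) (hiI : i ∈ I)
    (hmom : ∀ j ∈ I, ∫⁻ ω', ENNReal.ofReal ((Θ i ω' j) ^ α) ∂μ'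
      = ENNReal.ofReal (c j / c i)) :
    ∀ f : (Fin d → ℝ) → ℝ≥0∞, Measurable f →
      ∫⁻ x in {x | ∃ k ∈ I, 0 < x k}, f x ∂ν
        = ENNReal.ofReal (c i) *
          ∫⁻ ω', (∫⁻ z in Set.Ioi (0:ℝ),
            f (fun j => z * Θ i ω' j) * ENNReal.ofReal (α * z ^ (-α - 1))) ∂μ' := by
  intro f hf
  have hpos : MeasurableSet {x : Fin d → ℝ | 0 < x i} :=
    measurableSet_lt measurable_const (measurable_pi_apply i)
  have hrestrict : ν.restrict {x | 0 < x i} = polarMeasure α (c i) μ' (Θ i) := by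
    refine Measure.ext_of_setLIntegral_angular i (ae_restrict_mem hpos)
      (ae_polarMeasure_pos (hΘmeas i) (hΘii i hiI)) (fun a ha => ne_top_of_le_ne_top
        (hν.measure_setOf_lt_ne_top hiI ha) (Measure.restrict_apply_le _ _)) fun h hh a ha => ?_
    rw [Measure.restrict_restrict (measurableSet_lt measurable_const (measurable_pi_apply i)),
      inter_eq_left.mpr (ofPred_subset_ofPred.mpr fun x hx => ha.trans hx),
      hν.setLIntegral_angular_eq hXmeas hb hiI (htail i hiI) h hh (hconv i hiI h) ha,
      setLIntegral_polarMeasure_angular_eq hα (hc i hiI).le (hΘmeas i) (hΘii i hiI) h hh ha]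
  have hsupp : {x | ∃ k ∈ I, 0 < x k} =ᵐ[ν] {x | 0 < x i} :=
    setOf_exists_pos_ae_eq_of_restrict_eq hpos (fun x hx => ⟨i, hiI, hx⟩) hrestrict
      fun k hk u hu => ⟨hν.measure_setOf_lt_ne_top hk hu, by
        rw [polarMeasure_setOf_lt_eq hα (hc i hiI) (hΘmeas i) (hΘnn i · k) (hmom k hk) hu,
          hν.measure_setOf_lt_eq hXmeas hb hk (hc k hk) (htail k hk) hu]⟩
  rw [setLIntegral_congr hsupp, hrestrict, lintegral_polarMeasure (hΘmeas i) hf]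
  congr 1
  exact lintegral_congr fun ω' => lintegral_radialMeasure α (hf.comp (by fun_prop))

/-- Corollary `cor:justk`, equation `eq:Thk2nu`: if
`E[Θ_{i,j}^α] = c_j/c_i` for all `j ∈ I`, then the tail measure is reconstructed from the
single limit `Θ_i` via `ν(f) = c_i E[∫_0^∞ f(z Θ_i) α z^{-α-1} dz]`. -/
theorem tail_measure_from_single_root
    {d : ℕ} {Ω : Type*} [MeasurableSpace Ω] (μ : Measure Ω) [IsProbabilityMeasure μ]
    (X : Ω → Fin d → ℝ) (hXmeas : Measurable X) (hXnn : ∀ ω i, 0 ≤ X ω i)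
    (I : Finset (Fin d)) (hI : I.Nonempty)
    (b : ℝ → ℝ) (α : ℝ) (hα : 0 < α) (hb : RegularlyVarying b α)
    (c : Fin d → ℝ) (hc : ∀ i ∈ I, 0 < c i)
    (htail : ∀ i ∈ I,
      Tendsto (fun t => b t * (μ {ω | t < X ω i}).toReal) atTop (𝓝 (c i)))
    {Ω' : Type*} [MeasurableSpace Ω'] (μ' : Measure Ω') [IsProbabilityMeasure μ']
    (Θ : Fin d → Ω' → Fin d → ℝ) (hΘmeas : ∀ i, Measurable (Θ i))
    (hΘnn : ∀ i ω' j, 0 ≤ Θ i ω' j)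
    (hΘii : ∀ i ∈ I, ∀ᵐ ω' ∂μ', Θ i ω' i = 1)
    (hconv : ∀ i ∈ I, ∀ f : BoundedContinuousFunction (Fin d → ℝ) ℝ,
      Tendsto (fun t => ∫ ω, f (fun j => X ω j / X ω i) ∂(μ[|{ω | t < X ω i}])) atTop
        (𝓝 (∫ ω', f (Θ i ω') ∂μ')))
    (ν : Measure (Fin d → ℝ)) (hν : IsTailMeasure μ X I b ν)
    (i : Fin d) (hiI : i ∈ I)
    (hmom : ∀ j ∈ I, ∫⁻ ω', ENNReal.ofReal ((Θ i ω' j) ^ α) ∂μ'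
      = ENNReal.ofReal (c j / c i)) :
    ∀ f : (Fin d → ℝ) → ℝ≥0∞, Measurable f →
      ∫⁻ x in {x | ∃ k ∈ I, 0 < x k}, f x ∂ν
        = ENNReal.ofReal (c i) *
          ∫⁻ ω', (∫⁻ z in Set.Ioi (0:ℝ),
            f (fun j => z * Θ i ω' j) * ENNReal.ofReal (α * z ^ (-α - 1))) ∂μ' :=
  tail_measure_from_single_root_general μ X hXmeas I b α hα hb c hc htail μ' Θ hΘmeas hΘnn hΘii
    hconv ν hν i hiI hmom
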